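/- Let G and H be finite connected graphs and let S be a monophonic position set of the Cartesian product G □ H. If (u,v) ∈ S, then S ∩ ({u} × V(H)) = {(u,v)} or S ∩ (V(G) × {v}) = {(u,v)}. -/

import Mathlib

open SimpleGraph

/-- A walk is *monophonic* if it is an induced path: it is a path and the only
edges of the graph between vertices of the walk are the edges of the walk. -/
def SimpleGraph.Walk.IsMonophonic {V : Type*} {G : SimpleGraph V} {u v : V}
    (p : G.Walk u v) : Prop :=
  p.IsPath ∧ ∀ a b : V, a ∈ p.support → b ∈ p.support → G.Adj a b → p.toSubgraph.Adj a b

/-- A set `S` is a *monophonic position set* if no monophonic path contains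
more than two vertices of `S`. -/
def SimpleGraph.IsMPSet {V : Type*} (G : SimpleGraph V) (S : Set V) : Prop :=
  ∀ ⦃u v : V⦄ (p : G.Walk u v), p.IsMonophonic → ({x ∈ S | x ∈ p.support}).ncard ≤ 2

/-- The *monophonic position number*: the largest cardinality of a monophonic
position set. -/
noncomputable def SimpleGraph.mpNum {V : Type*} (G : SimpleGraph V) : ℕ :=
  sSup {n | ∃ S : Set V, G.IsMPSet S ∧ S.ncard = n}

/-!
If `S` met both layers through `(u, v)` in further vertices `(u, v')` and `(u', v)`, then a
shortest `v'`–`v` path in the `H`-layer of `u` followed by a shortest `u`–`u'` path in the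
`G`-layer of `v` would be a monophonic path of `G □ H` through three vertices of `S`: shortest
paths are induced, and the only edges between the two layers are at their common vertex `(u, v)`.
-/

namespace SimpleGraph

variable {V V' : Type*} {G : SimpleGraph V} {G' : SimpleGraph V'}

namespace Walk

theorem isMonophonic_of_length_eq_dist {u w : V} {p : G.Walk u w}
    (hp : p.length = G.dist u w) : p.IsMonophonic := by
  refine ⟨p.isPath_of_length_eq_dist hp, ?_⟩
  suffices key : ∀ i j, i < j → j ≤ p.length → G.Adj (p.getVert i) (p.getVert j) →
      p.toSubgraph.Adj (p.getVert i) (p.getVert j) by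
    intro a b ha hb hab
    obtain ⟨i, rfl, hi⟩ := mem_support_iff_exists_getVert.mp ha
    obtain ⟨j, rfl, hj⟩ := mem_support_iff_exists_getVert.mp hb
    rcases lt_trichotomy i j with hij | rfl | hij
    · exact key i j hij hj hab
    · exact (G.irrefl hab).elim
    · exact (key j i hij hi hab.symm).symm
  intro i j hij hj hadj
  -- shortcutting `p` along the chord saves `j - i - 1` steps, so the chord is an edge of `p`
  have hshort := G.dist_le ((p.take i).append (cons hadj (p.drop j)))
  simp only [length_append, length_cons, take_length, drop_length] at hshort
  obtain rfl : j = i + 1 := by omega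
  exact p.toSubgraph_adj_getVert (by omega)

theorem IsMonophonic.map {u w : V} {p : G.Walk u w} (hp : p.IsMonophonic) (f : G ↪g G') :
    (p.map f.toHom).IsMonophonic := by
  refine ⟨hp.1.map f.injective, ?_⟩
  intro a b ha hb hab
  rw [support_map, List.mem_map] at ha hb
  obtain ⟨x, hx, rfl⟩ := ha
  obtain ⟨y, hy, rfl⟩ := hb
  rw [toSubgraph_map]
  exact ⟨x, y, hp.2 x y hx hy (f.map_rel_iff.mp hab), rfl, rfl⟩

theorem IsMonophonic.append {u c w : V} {p : G.Walk u c} {q : G.Walk c w}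
    (hp : p.IsMonophonic) (hq : q.IsMonophonic)
    (hmem : ∀ x ∈ p.support, x ∈ q.support → x = c)
    (hadj : ∀ x ∈ p.support, ∀ y ∈ q.support, G.Adj x y → x = c ∨ y = c) :
    (p.append q).IsMonophonic := by
  refine ⟨?_, ?_⟩
  · rw [isPath_def, support_append, List.nodup_append]
    refine ⟨hp.1.support_nodup, hq.1.support_nodup.sublist (List.tail_sublist _), ?_⟩
    rintro x hxp y hyq rfl
    have hc : c ∉ q.support.tail := by
      have := hq.1.support_nodup
      rw [← cons_tail_support] at this
      exact (List.nodup_cons.mp this).1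
    exact hc (hmem x hxp (List.mem_of_mem_tail hyq) ▸ hyq)
  · have hpq : ∀ x ∈ p.support, ∀ y ∈ q.support, G.Adj x y →
        (p.append q).toSubgraph.Adj x y := by
      intro x hx y hy hxy
      rw [toSubgraph_append, Subgraph.sup_adj]
      rcases hadj x hx y hy hxy with rfl | rfl
      · exact .inr (hq.2 _ _ q.start_mem_support hy hxy)
      · exact .inl (hp.2 _ _ hx p.end_mem_support hxy)
    intro a b ha hb hab
    rw [mem_support_append_iff] at ha hb
    rcases ha with ha | ha <;> rcases hb with hb | hb
    · exact toSubgraph_append p q ▸ .inl (hp.2 a b ha hb hab)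
    · exact hpq a ha b hb hab
    · exact (hpq b hb a ha hab.symm).symm
    · exact toSubgraph_append p q ▸ .inr (hq.2 a b ha hb hab)

theorem fst_eq_of_mem_support_boxProdRight {H : SimpleGraph V'} {a : V} {b₁ b₂ : V'}
    {q : H.Walk b₁ b₂} {x : V × V'} (hx : x ∈ (q.boxProdRight G a).support) : x.1 = a := by
  have hx' : x ∈ (q.map (G.boxProdRight H a).toHom).support := hx
  rw [support_map, List.mem_map] at hx'
  obtain ⟨b, -, rfl⟩ := hx'
  rfl

theorem snd_eq_of_mem_support_boxProdLeft {H : SimpleGraph V'} {a₁ a₂ : V} {b : V'}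
    {p : G.Walk a₁ a₂} {x : V × V'} (hx : x ∈ (p.boxProdLeft H b).support) : x.2 = b := by
  have hx' : x ∈ (p.map (G.boxProdLeft H b).toHom).support := hx
  rw [support_map, List.mem_map] at hx'
  obtain ⟨a, -, rfl⟩ := hx'
  rfl

theorem IsMonophonic.boxProdRight_append_boxProdLeft {H : SimpleGraph V'} {a₁ a₂ : V}
    {b₁ b₂ : V'} {q : H.Walk b₁ b₂} {p : G.Walk a₁ a₂} (hq : q.IsMonophonic)
    (hp : p.IsMonophonic) :
    ((q.boxProdRight G a₁).append (p.boxProdLeft H b₂)).IsMonophonic := by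
  refine (hq.map _).append (hp.map _) (fun x hxq hxp => ?_) (fun x hxq y hyp hxy => ?_)
  · exact Prod.ext (fst_eq_of_mem_support_boxProdRight hxq) (snd_eq_of_mem_support_boxProdLeft hxp)
  · obtain ⟨x₁, x₂⟩ := x
    obtain ⟨y₁, y₂⟩ := y
    obtain rfl := fst_eq_of_mem_support_boxProdRight hxq
    obtain rfl := snd_eq_of_mem_support_boxProdLeft hyp
    rcases boxProd_adj.mp hxy with ⟨-, rfl⟩ | ⟨-, rfl⟩
    · exact .inl rfl
    · exact .inr rfl

end Walk

theorem Reachable.exists_isMonophonic {u w : V} (h : G.Reachable u w) :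
    ∃ p : G.Walk u w, p.IsMonophonic :=
  let ⟨p, hp⟩ := h.exists_walk_length_eq_dist
  ⟨p, Walk.isMonophonic_of_length_eq_dist hp⟩

theorem IsMPSet.eq_or_eq_or_eq {S : Set V} (hS : G.IsMPSet S) {u w : V} {p : G.Walk u w}
    (hp : p.IsMonophonic) {x y z : V} (hx : x ∈ S) (hy : y ∈ S) (hz : z ∈ S)
    (hxp : x ∈ p.support) (hyp : y ∈ p.support) (hzp : z ∈ p.support) :
    x = y ∨ x = z ∨ y = z := by
  by_contra! hne
  obtain ⟨hxy, hxz, hyz⟩ := hne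
  have hsub : ({x, y, z} : Set V) ⊆ {a ∈ S | a ∈ p.support} :=
    Set.insert_subset ⟨hx, hxp⟩ <| Set.insert_subset ⟨hy, hyp⟩ <|
      Set.singleton_subset_iff.mpr ⟨hz, hzp⟩
  have := (Set.ncard_le_ncard hsub (p.support.finite_toSet.subset fun a ha => ha.2)).trans (hS p hp)
  rw [Set.ncard_eq_three.mpr ⟨x, y, z, hxy, hxz, hyz, rfl⟩] at this
  omega

end SimpleGraph

theorem isMPSet_boxProd_layer_inter_general {α β : Type*}
    (G : SimpleGraph α) (H : SimpleGraph β) (hG : G.Connected) (hH : H.Connected)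
    (S : Set (α × β)) (hS : (G □ H).IsMPSet S) (u : α) (v : β) (huv : (u, v) ∈ S) :
    S ∩ ({u} ×ˢ Set.univ) = {(u, v)} ∨ S ∩ (Set.univ ×ˢ {v}) = {(u, v)} := by
  by_contra! h
  have hu : (u, v) ∈ S ∩ ({u} ×ˢ Set.univ) := ⟨huv, rfl, trivial⟩
  have hv : (u, v) ∈ S ∩ (Set.univ ×ˢ {v}) := ⟨huv, trivial, rfl⟩
  obtain ⟨⟨u, v'⟩, ⟨hxS, rfl, -⟩, hv'⟩ :=
    ((Set.nontrivial_iff_ne_singleton hu).mpr h.1).exists_ne (u, v)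
  obtain ⟨⟨u', v⟩, ⟨hyS, -, rfl⟩, hu'⟩ :=
    ((Set.nontrivial_iff_ne_singleton hv).mpr h.2).exists_ne (u, v)
  obtain ⟨q, hq⟩ := (hH.preconnected v' v).exists_isMonophonic
  obtain ⟨p, hp⟩ := (hG.preconnected u u').exists_isMonophonic
  have hW := hq.boxProdRight_append_boxProdLeft hp
  rcases hS.eq_or_eq_or_eq hW hxS huv hyS (Walk.start_mem_support _)
    ((Walk.mem_support_append_iff _ _).mpr (.inr (Walk.start_mem_support _)))
    (Walk.end_mem_support _) with h | h | h
  · exact hv' h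
  · exact hv' (congrArg (Prod.mk u) (congrArg Prod.snd h))
  · exact hu' h.symm

/-- If `S` is a monophonic position set of `G □ H` and `(u,v) ∈ S`, then
`S ∩ ({u} × V(H)) = {(u,v)}` or `S ∩ (V(G) × {v}) = {(u,v)}`. -/
theorem isMPSet_boxProd_layer_inter {α β : Type*} [Fintype α] [Fintype β]
    (G : SimpleGraph α) (H : SimpleGraph β) (hG : G.Connected) (hH : H.Connected)
    (S : Set (α × β)) (hS : (G □ H).IsMPSet S) (u : α) (v : β) (huv : (u, v) ∈ S) :
    S ∩ ({u} ×ˢ Set.univ) = {(u, v)} ∨ S ∩ (Set.univ ×ˢ {v}) = {(u, v)} :=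
  isMPSet_boxProd_layer_inter_general G H hG hH S hS u v huv
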